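/- Let k be a field of characteristic 0, let d ≥ 3 be an integer, and let a₀, a₁, a₂, a₃ ∈ kˣ. Then the diagonal surface a₀x₀^d + a₁x₁^d + a₂x₂^d + a₃x₃^d = 0 contains a line over k if and only if at least one of the following holds: (i) −a₁/a₀ and −a₂/a₃ are both d-th powers in k; (ii) −a₂/a₀ and −a₃/a₁ are both d-th powers in k; (iii) −a₃/a₀ and −a₁/a₂ are both d-th powers in k. -/
import Mathlib


open MvPolynomial

/-- The diagonal surface `∑ aᵢ xᵢ^d = 0` contains a line over the field `K`. -/
def ContainsLine (K : Type*) [Field K] (d : ℕ) (a : Fin 4 → K) : Prop :=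
  ∃ l₁ l₂ : MvPolynomial (Fin 4) K,
    l₁.IsHomogeneous 1 ∧ l₂.IsHomogeneous 1 ∧
    LinearIndependent K ![l₁, l₂] ∧
    (∑ i : Fin 4, C (a i) * X i ^ d) ∈ Ideal.span {l₁, l₂}

lemma key {k : Type*} [Field k] (d : ℕ) (hd : 3 ≤ d)
    (ap aq ar as vr wr vs ws : k)
    (hap : ap ≠ 0) (haq : aq ≠ 0) (har : ar ≠ 0) (has : as ≠ 0)
    (h0 : aq + (ar * (wr ^ d) + as * (ws ^ d)) = 0)
    (h1 : ar * (vr * wr ^ (d - 1)) + as * (vs * ws ^ (d - 1)) = 0)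
    (h2 : ar * (vr ^ 2 * wr ^ (d - 2)) + as * (vs ^ 2 * ws ^ (d - 2)) = 0)
    (hdd : ap + (ar * (vr ^ d) + as * (vs ^ d)) = 0) :
    ((∃ x : k, x ^ d = -(ap / ar)) ∧ (∃ y : k, y ^ d = -(aq / as))) ∨
    ((∃ x : k, x ^ d = -(aq / ar)) ∧ (∃ y : k, y ^ d = -(ap / as))) := by
  obtain ⟨m, rfl⟩ : ∃ m, d = m + 3 := ⟨d - 3, by omega⟩
  rw [(by omega : m + 3 - 1 = m + 2)] at h1
  rw [(by omega : m + 3 - 2 = m + 1)] at h2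
  have hvwr : vr * wr = 0 := by
    by_contra hvw
    have hvr : vr ≠ 0 := left_ne_zero_of_mul hvw
    have hwr : wr ≠ 0 := right_ne_zero_of_mul hvw
    have hlhs : ar * (vr * wr ^ (m + 2)) ≠ 0 :=
      mul_ne_zero har (mul_ne_zero hvr (pow_ne_zero _ hwr))
    have hrs : as * (vs * ws ^ (m + 2)) ≠ 0 := by
      intro h; rw [h, add_zero] at h1; exact hlhs h1
    have hvs : vs ≠ 0 := by intro h; apply hrs; simp [h]
    have hws : ws ≠ 0 := by
      intro h; apply hrs; simp [h, zero_pow]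
    have E : ar * vr * wr ^ (m + 1) * (vr * ws - vs * wr) = 0 := by
      linear_combination ws * h2 - vs * h1
    have hcross : vr * ws = vs * wr := by
      rcases mul_eq_zero.mp E with h | h
      · exact absurd h (mul_ne_zero (mul_ne_zero har hvr) (pow_ne_zero _ hwr))
      · exact sub_eq_zero.mp h
    have E2 : vr * (ar * wr ^ (m + 3) + as * ws ^ (m + 3)) = 0 := by
      linear_combination wr * h1 + as * ws ^ (m + 2) * hcross
    have hzero : ar * wr ^ (m + 3) + as * ws ^ (m + 3) = 0 :=
      (mul_eq_zero.mp E2).resolve_left hvr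
    exact haq (by linear_combination h0 - hzero)
  have hvws : vs * ws = 0 := by
    by_contra hvw
    have hvs : vs ≠ 0 := left_ne_zero_of_mul hvw
    have hws : ws ≠ 0 := right_ne_zero_of_mul hvw
    have hrs : as * (vs * ws ^ (m + 2)) ≠ 0 :=
      mul_ne_zero has (mul_ne_zero hvs (pow_ne_zero _ hws))
    have hl : ar * (vr * wr ^ (m + 2)) ≠ 0 := by
      intro h; rw [h, zero_add] at h1; exact hrs h1
    apply hl
    rcases mul_eq_zero.mp hvwr with h' | h' <;> simp [h', zero_pow]
  rcases mul_eq_zero.mp hvwr with hr | hr <;> rcases mul_eq_zero.mp hvws with hs | hs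
  · exfalso; apply hap; rw [hr, hs] at hdd; simpa [zero_pow] using hdd
  · -- vr = 0, ws = 0 : right branch
    right
    have h0' : aq + ar * wr ^ (m + 3) = 0 := by rw [hs] at h0; simpa [zero_pow] using h0
    have hdd' : ap + as * vs ^ (m + 3) = 0 := by rw [hr] at hdd; simpa [zero_pow] using hdd
    refine ⟨⟨wr, ?_⟩, ⟨vs, ?_⟩⟩
    · field_simp; linear_combination h0'
    · field_simp; linear_combination hdd'
  · -- wr = 0, vs = 0 : left branch
    left
    have hdd' : ap + ar * vr ^ (m + 3) = 0 := by rw [hs] at hdd; simpa [zero_pow] using hdd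
    have h0' : aq + as * ws ^ (m + 3) = 0 := by rw [hr] at h0; simpa [zero_pow] using h0
    refine ⟨⟨vr, ?_⟩, ⟨ws, ?_⟩⟩
    · field_simp; linear_combination hdd'
    · field_simp; linear_combination h0'
  · exfalso; apply haq; rw [hr, hs] at h0; simpa [zero_pow] using h0


lemma flipRatio {k : Type*} [Field k] (d : ℕ) (hd : d ≠ 0) (x y : k) (hx : x ≠ 0) (hy : y ≠ 0) :
    (∃ t : k, t ^ d = -(x / y)) → ∃ t : k, t ^ d = -(y / x) := by
  rintro ⟨t, ht⟩
  have htne : t ≠ 0 := by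
    intro h
    rw [h, zero_pow hd] at ht
    exact (neg_ne_zero.mpr (div_ne_zero hx hy)) ht.symm
  exact ⟨t⁻¹, by rw [inv_pow, ht]; simp [inv_neg, inv_div]⟩

lemma asm1 {k : Type*} [Field k] (d : ℕ) (hd : d ≠ 0) (a : Fin 4 → k) (ha : ∀ i, a i ≠ 0)
    (p q r s : Fin 4)
    (hpq : p ≠ q) (hpr : p ≠ r) (hps : p ≠ s) (hqr : q ≠ r) (hqs : q ≠ s) (hrs : r ≠ s)
    (h1 : ∃ x : k, x ^ d = -(a p / a r)) (h2 : ∃ y : k, y ^ d = -(a q / a s)) :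
    ((∃ x : k, x ^ d = -(a 1 / a 0)) ∧ (∃ y : k, y ^ d = -(a 2 / a 3))) ∨
    ((∃ x : k, x ^ d = -(a 2 / a 0)) ∧ (∃ y : k, y ^ d = -(a 3 / a 1))) ∨
    ((∃ x : k, x ^ d = -(a 3 / a 0)) ∧ (∃ y : k, y ^ d = -(a 1 / a 2))) := by
  have h1' : ∃ x : k, x ^ d = -(a r / a p) := flipRatio d hd _ _ (ha p) (ha r) h1
  have h2' : ∃ y : k, y ^ d = -(a s / a q) := flipRatio d hd _ _ (ha q) (ha s) h2
  fin_cases p <;> fin_cases q <;> fin_cases r <;> fin_cases s <;>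
    first
    | exact absurd rfl hpq | exact absurd rfl hpr | exact absurd rfl hps
    | exact absurd rfl hqr | exact absurd rfl hqs | exact absurd rfl hrs
    | exact Or.inl ⟨by first | exact h1 | exact h2 | exact h1' | exact h2',
        by first | exact h1 | exact h2 | exact h1' | exact h2'⟩
    | exact Or.inr (Or.inl ⟨by first | exact h1 | exact h2 | exact h1' | exact h2',
        by first | exact h1 | exact h2 | exact h1' | exact h2'⟩)
    | exact Or.inr (Or.inr ⟨by first | exact h1 | exact h2 | exact h1' | exact h2',
        by first | exact h1 | exact h2 | exact h1' | exact h2'⟩)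


lemma single_of_degree_one (m : Fin 4 →₀ ℕ) (h : Finsupp.weight (1 : Fin 4 → ℕ) m = 1) :
    ∃ i, m = Finsupp.single i 1 := by
  have hw : ∑ i, m i = 1 := by
    rw [Finsupp.weight_apply] at h
    rw [← h, Finsupp.sum]
    rw [Finset.sum_subset (Finset.subset_univ m.support)]
    · simp
    · intro x _ hx
      simp [Finsupp.notMem_support_iff.mp hx]
  rw [Fin.sum_univ_four] at hw
  have : (m 0 = 1 ∧ m 1 = 0 ∧ m 2 = 0 ∧ m 3 = 0) ∨ (m 1 = 1 ∧ m 0 = 0 ∧ m 2 = 0 ∧ m 3 = 0) ∨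
      (m 2 = 1 ∧ m 0 = 0 ∧ m 1 = 0 ∧ m 3 = 0) ∨ (m 3 = 1 ∧ m 0 = 0 ∧ m 1 = 0 ∧ m 2 = 0) := by
    omega
  rcases this with ⟨h0, h1, h2, h3⟩ | ⟨h0, h1, h2, h3⟩ | ⟨h0, h1, h2, h3⟩ | ⟨h0, h1, h2, h3⟩
  · exact ⟨0, Finsupp.ext fun i => by fin_cases i <;> simp_all [Finsupp.single_apply]⟩
  · exact ⟨1, Finsupp.ext fun i => by fin_cases i <;> simp_all [Finsupp.single_apply]⟩
  · exact ⟨2, Finsupp.ext fun i => by fin_cases i <;> simp_all [Finsupp.single_apply]⟩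
  · exact ⟨3, Finsupp.ext fun i => by fin_cases i <;> simp_all [Finsupp.single_apply]⟩

lemma homog_one_decomp {k : Type*} [Field k] (l : MvPolynomial (Fin 4) k)
    (h : l.IsHomogeneous 1) :
    l = ∑ i, C (coeff (Finsupp.single i 1) l) * X i := by
  apply MvPolynomial.ext
  intro m
  rw [coeff_sum]
  by_cases hm : ∃ i, m = Finsupp.single i 1
  · obtain ⟨i, rfl⟩ := hm
    rw [Finset.sum_eq_single i]
    · simp [coeff_C_mul, coeff_X']
    · intro j _ hj
      have : Finsupp.single j 1 ≠ Finsupp.single i 1 := by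
        intro hh
        exact hj (by simpa [Finsupp.single_eq_single_iff] using hh)
      simp [coeff_C_mul, coeff_X', this]
    · simp
  · have hc : coeff m l = 0 := by
      by_contra hc
      exact hm (single_of_degree_one m (h hc))
    rw [hc]
    symm
    apply Finset.sum_eq_zero
    intro j _
    have : Finsupp.single j 1 ≠ m := fun hh => hm ⟨j, hh.symm⟩
    simp [coeff_C_mul, coeff_X', this]


lemma exists_kernel_pair {k : Type*} [Field k] (c₁ c₂ : Fin 4 → k) :
    ∃ v w : Fin 4 → k,
      (∑ i, c₁ i * v i = 0) ∧ (∑ i, c₂ i * v i = 0) ∧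
      (∑ i, c₁ i * w i = 0) ∧ (∑ i, c₂ i * w i = 0) ∧
      ∃ p q : Fin 4, v p * w q - v q * w p ≠ 0 := by
  classical
  let f : (Fin 4 → k) → ((Fin 4 → k) →ₗ[k] k) := fun c => ∑ i, c i • LinearMap.proj i
  have hf : ∀ c u, f c u = ∑ i, c i * u i := by
    intro c u
    simp [f, LinearMap.sum_apply]
  let L : (Fin 4 → k) →ₗ[k] k × k := (f c₁).prod (f c₂)
  have hker : 2 ≤ Module.finrank k (LinearMap.ker L) := by
    have h1 := LinearMap.finrank_range_add_finrank_ker L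
    have h2 : Module.finrank k (LinearMap.range L) ≤ 2 := by
      have := Submodule.finrank_le (LinearMap.range L)
      simpa using this
    have h3 : Module.finrank k (Fin 4 → k) = 4 := by simp
    omega
  obtain ⟨g, hg⟩ := exists_linearIndependent_of_le_finrank hker
  have hgind : LinearIndependent k (fun i => ((g i : Fin 4 → k))) :=
    hg.map' (LinearMap.ker L).subtype (Submodule.ker_subtype _)
  set v : Fin 4 → k := (g 0 : Fin 4 → k) with hv
  set w : Fin 4 → k := (g 1 : Fin 4 → k) with hw
  have hmemv := (g 0).2
  have hmemw := (g 1).2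
  rw [LinearMap.mem_ker] at hmemv hmemw
  have hLv : f c₁ v = 0 ∧ f c₂ v = 0 := by
    constructor <;> [exact congrArg Prod.fst hmemv; exact congrArg Prod.snd hmemv]
  have hLw : f c₁ w = 0 ∧ f c₂ w = 0 := by
    constructor <;> [exact congrArg Prod.fst hmemw; exact congrArg Prod.snd hmemw]
  refine ⟨v, w, by rw [← hf c₁ v]; exact hLv.1, by rw [← hf c₂ v]; exact hLv.2,
    by rw [← hf c₁ w]; exact hLw.1, by rw [← hf c₂ w]; exact hLw.2, ?_⟩
  by_contra hmin
  push_neg at hmin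
  have heta : (fun i => ((g i : Fin 4 → k))) = ![v, w] := by
    funext i; fin_cases i <;> rfl
  rw [heta, linearIndependent_fin2] at hgind
  obtain ⟨hw0, hsm⟩ := hgind
  have hv0 : v ≠ 0 := by
    intro h
    apply hsm 0
    simp [h]
  have hw0' : w ≠ 0 := by simpa using hw0
  have hsm' : ∀ a : k, a • w ≠ v := by intro a; simpa using hsm a
  obtain ⟨p, hp0⟩ := Function.ne_iff.mp hv0
  have hp : v p ≠ 0 := by simpa using hp0
  have hwp : w = (w p / v p) • v := by
    funext i
    have h2 : v p * w i - v i * w p = 0 := hmin p i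
    simp only [Pi.smul_apply, smul_eq_mul, div_mul_eq_mul_div, eq_div_iff hp]
    linear_combination h2
  set c := w p / v p with hcdef
  rcases eq_or_ne c 0 with hc | hc
  · exact hw0' (by rw [hwp, hc, zero_smul])
  · apply hsm' c⁻¹
    rw [hwp, smul_smul, inv_mul_cancel₀ hc, one_smul]

lemma coeff_lin_pow {k : Type*} [CommRing k] (v w : k) (d j : ℕ) (hj : j ≤ d) :
    ((Polynomial.C v * Polynomial.X + Polynomial.C w) ^ d).coeff j
      = d.choose j * (v ^ j * w ^ (d - j)) := by
  rw [add_pow, Polynomial.finset_sum_coeff]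
  have hterm : ∀ i, ((Polynomial.C v * Polynomial.X) ^ i * Polynomial.C w ^ (d - i)
      * (d.choose i : Polynomial k)).coeff j
      = if j = i then (d.choose i : k) * (v ^ i * w ^ (d - i)) else 0 := by
    intro i
    rw [mul_pow, ← Polynomial.C_pow, ← Polynomial.C_pow, ← Polynomial.C_eq_natCast,
      Polynomial.coeff_mul_C, Polynomial.coeff_mul_C, Polynomial.coeff_C_mul,
      Polynomial.coeff_X_pow]
    split_ifs with h <;> simp <;> ring
  simp only [hterm]
  rw [Finset.sum_ite_eq (Finset.range (d + 1)) j]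
  simp [Nat.lt_succ_of_le hj]

lemma mid {k : Type*} [Field k] (d : ℕ) (hd : 3 ≤ d) (a v w : Fin 4 → k)
    (ha : ∀ i, a i ≠ 0) (p q r s : Fin 4)
    (hpq : p ≠ q) (hpr : p ≠ r) (hps : p ≠ s) (hqr : q ≠ r) (hqs : q ≠ s) (hrs : r ≠ s)
    (hvp : v p = 1) (hwp : w p = 0) (hvq : v q = 0) (hwq : w q = 1)
    (heq : ∀ j, j ≤ d → ∑ i, a i * (v i ^ j * w i ^ (d - j)) = 0) :
    ((∃ x : k, x ^ d = -(a p / a r)) ∧ (∃ y : k, y ^ d = -(a q / a s))) ∨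
    ((∃ x : k, x ^ d = -(a q / a r)) ∧ (∃ y : k, y ^ d = -(a p / a s))) := by
  have hcard : ({p, q, r, s} : Finset (Fin 4)).card = 4 := by
    rw [Finset.card_insert_of_notMem (by simp [hpq, hpr, hps]),
        Finset.card_insert_of_notMem (by simp [hqr, hqs]),
        Finset.card_insert_of_notMem (by simp [hrs]), Finset.card_singleton]
  have huniv : (Finset.univ : Finset (Fin 4)) = {p, q, r, s} :=
    (Finset.eq_univ_of_card _ (by simp [hcard])).symm
  have hsum : ∀ f : Fin 4 → k, ∑ i, f i = f p + f q + f r + f s := by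
    intro f
    rw [huniv, Finset.sum_insert (by simp [hpq, hpr, hps]),
        Finset.sum_insert (by simp [hqr, hqs]),
        Finset.sum_insert (by simp [hrs]), Finset.sum_singleton]
    ring
  have H0 : a q + (a r * (w r ^ d) + a s * (w s ^ d)) = 0 := by
    have h := heq 0 (by omega)
    rw [hsum] at h
    simp only [hvp, hwp, hvq, hwq, pow_zero, one_mul, Nat.sub_zero,
      zero_pow (show d ≠ 0 by omega), mul_zero, one_pow, mul_one] at h
    linear_combination h
  have H1 : a r * (v r * w r ^ (d - 1)) + a s * (v s * w s ^ (d - 1)) = 0 := by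
    have h := heq 1 (by omega)
    rw [hsum] at h
    simp only [hvp, hwp, hvq, hwq, pow_one, one_mul,
      zero_pow (show d - 1 ≠ 0 by omega), mul_zero, zero_mul, one_pow, mul_one] at h
    linear_combination h
  have H2 : a r * (v r ^ 2 * w r ^ (d - 2)) + a s * (v s ^ 2 * w s ^ (d - 2)) = 0 := by
    have h := heq 2 (by omega)
    rw [hsum] at h
    simp only [hvp, hwp, hvq, hwq, one_pow, one_mul,
      zero_pow (show d - 2 ≠ 0 by omega), zero_pow (show (2:ℕ) ≠ 0 by omega),
      mul_zero, zero_mul, mul_one] at h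
    linear_combination h
  have Hd : a p + (a r * (v r ^ d) + a s * (v s ^ d)) = 0 := by
    have h := heq d le_rfl
    rw [hsum] at h
    simp only [hvp, hwp, hvq, hwq, Nat.sub_self, pow_zero, one_pow, one_mul, mul_one,
      zero_pow (show d ≠ 0 by omega), mul_zero, zero_mul] at h
    linear_combination h
  exact key d hd (a p) (a q) (a r) (a s) (v r) (w r) (v s) (w s)
    (ha p) (ha q) (ha r) (ha s) H0 H1 H2 Hd



lemma sum_four {M : Type*} [AddCommMonoid M] (f : Fin 4 → M) (p q r s : Fin 4)
    (hpq : p ≠ q) (hpr : p ≠ r) (hps : p ≠ s) (hqr : q ≠ r) (hqs : q ≠ s) (hrs : r ≠ s) :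
    ∑ i, f i = f p + f q + f r + f s := by
  have hcard : ({p, q, r, s} : Finset (Fin 4)).card = 4 := by
    rw [Finset.card_insert_of_notMem (by simp [hpq, hpr, hps]),
        Finset.card_insert_of_notMem (by simp [hqr, hqs]),
        Finset.card_insert_of_notMem (by simp [hrs]), Finset.card_singleton]
  have huniv : (Finset.univ : Finset (Fin 4)) = {p, q, r, s} :=
    (Finset.eq_univ_of_card _ (by simp [hcard])).symm
  rw [huniv, Finset.sum_insert (by simp [hpq, hpr, hps]),
      Finset.sum_insert (by simp [hqr, hqs]),
      Finset.sum_insert (by simp [hrs]), Finset.sum_singleton]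
  simp [add_assoc]

lemma hsingle_ne {i j : Fin 4} (h : i ≠ j) :
    (Finsupp.single i 1 : Fin 4 →₀ ℕ) ≠ Finsupp.single j 1 :=
  fun hh => h (Finsupp.single_left_injective one_ne_zero hh)

lemma back {k : Type*} [Field k] (d : ℕ) (hd : 3 ≤ d) (a : Fin 4 → k) (ha : ∀ i, a i ≠ 0)
    (i j m n : Fin 4)
    (hij : i ≠ j) (him : i ≠ m) (hin : i ≠ n) (hjm : j ≠ m) (hjn : j ≠ n) (hmn : m ≠ n)
    (x y : k) (hx : x ^ d = -(a j / a i)) (hy : y ^ d = -(a m / a n)) :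
    ContainsLine k d a := by
  refine ⟨X i - C x * X j, X n - C y * X m,
    (isHomogeneous_X _ _).sub (isHomogeneous_C_mul_X _ _),
    (isHomogeneous_X _ _).sub (isHomogeneous_C_mul_X _ _), ?_, ?_⟩
  · rw [LinearIndependent.pair_iff]
    intro s t hst
    constructor
    · have h1 := congrArg (coeff (Finsupp.single i 1)) hst
      simp [coeff_add, coeff_smul, coeff_sub, coeff_C_mul, coeff_X',
        hsingle_ne hij.symm, hsingle_ne hin.symm, hsingle_ne him.symm] at h1
      exact h1
    · have h1 := congrArg (coeff (Finsupp.single n 1)) hst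
      simp [coeff_add, coeff_smul, coeff_sub, coeff_C_mul, coeff_X',
        hsingle_ne hin, hsingle_ne hjn, hsingle_ne hmn] at h1
      exact h1
  · rw [sum_four (fun i => C (a i) * X i ^ d) i j m n hij him hin hjm hjn hmn]
    have hxC : (C x : MvPolynomial (Fin 4) k) ^ d = C (-(a j / a i)) := by
      rw [← C_pow, hx]
    have hC1 : (C (a i) : MvPolynomial (Fin 4) k) * C (-(a j / a i)) = -C (a j) := by
      rw [← C_mul, ← map_neg]
      congr 1
      rw [mul_neg, neg_inj, ← mul_div_assoc, mul_comm (a i) (a j), mul_div_assoc,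
        div_self (ha i), mul_one]
    have hyC : (C y : MvPolynomial (Fin 4) k) ^ d = C (-(a m / a n)) := by
      rw [← C_pow, hy]
    have hC2 : (C (a n) : MvPolynomial (Fin 4) k) * C (-(a m / a n)) = -C (a m) := by
      rw [← C_mul, ← map_neg]
      congr 1
      rw [mul_neg, neg_inj, ← mul_div_assoc, mul_comm (a n) (a m), mul_div_assoc,
        div_self (ha n), mul_one]
    obtain ⟨c₁, hc₁⟩ := sub_dvd_pow_sub_pow (X i : MvPolynomial (Fin 4) k) (C x * X j) d
    obtain ⟨c₂, hc₂⟩ := sub_dvd_pow_sub_pow (X n : MvPolynomial (Fin 4) k) (C y * X m) d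
    have hT₁ : C (a i) * X i ^ d + C (a j) * X j ^ d
        = ((X i - C x * X j) * c₁) * C (a i) := by
      rw [← hc₁]
      linear_combination (C (a i) * (X j : MvPolynomial (Fin 4) k) ^ d) * hxC
        + (X j : MvPolynomial (Fin 4) k) ^ d * hC1
    have hT₂ : C (a m) * X m ^ d + C (a n) * X n ^ d
        = ((X n - C y * X m) * c₂) * C (a n) := by
      rw [← hc₂]
      linear_combination (C (a n) * (X m : MvPolynomial (Fin 4) k) ^ d) * hyC
        + (X m : MvPolynomial (Fin 4) k) ^ d * hC2
    have hmem₁ : (X i - C x * X j : MvPolynomial (Fin 4) k) ∈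
        Ideal.span {X i - C x * X j, X n - C y * X m} := Ideal.subset_span (by simp)
    have hmem₂ : (X n - C y * X m : MvPolynomial (Fin 4) k) ∈
        Ideal.span {X i - C x * X j, X n - C y * X m} := Ideal.subset_span (by simp)
    have : C (a i) * X i ^ d + C (a j) * X j ^ d + C (a m) * X m ^ d + C (a n) * X n ^ d
        = (C (a i) * X i ^ d + C (a j) * X j ^ d) + (C (a m) * X m ^ d + C (a n) * X n ^ d) := by
      ring
    rw [this, hT₁, hT₂]
    exact Ideal.add_mem _ (Ideal.mul_mem_right _ _ (Ideal.mul_mem_right _ _ hmem₁))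
      (Ideal.mul_mem_right _ _ (Ideal.mul_mem_right _ _ hmem₂))


section Helpers

variable {k : Type*} [Field k]

theorem forward_aux [CharZero k] (d : ℕ) (hd : 3 ≤ d) (a : Fin 4 → k) (ha : ∀ i, a i ≠ 0)
    (l₁ l₂ : MvPolynomial (Fin 4) k) (h₁ : l₁.IsHomogeneous 1) (h₂ : l₂.IsHomogeneous 1)
    (hmem : (∑ i : Fin 4, C (a i) * X i ^ d) ∈ Ideal.span {l₁, l₂}) :
    ((∃ x : k, x ^ d = -(a 1 / a 0)) ∧ (∃ y : k, y ^ d = -(a 2 / a 3))) ∨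
    ((∃ x : k, x ^ d = -(a 2 / a 0)) ∧ (∃ y : k, y ^ d = -(a 3 / a 1))) ∨
    ((∃ x : k, x ^ d = -(a 3 / a 0)) ∧ (∃ y : k, y ^ d = -(a 1 / a 2))) := by
  classical
  set c₁ : Fin 4 → k := fun i => coeff (Finsupp.single i 1) l₁ with hc₁
  set c₂ : Fin 4 → k := fun i => coeff (Finsupp.single i 1) l₂ with hc₂
  have hl₁ : l₁ = ∑ i, C (c₁ i) * X i := homog_one_decomp l₁ h₁
  have hl₂ : l₂ = ∑ i, C (c₂ i) * X i := homog_one_decomp l₂ h₂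
  obtain ⟨v, w, hv1, hv2, hw1, hw2, p, q, hD⟩ := exists_kernel_pair c₁ c₂
  set D : k := v p * w q - v q * w p with hDdef
  set v' : Fin 4 → k := fun i => (w q * v i - v q * w i) / D with hv'
  set w' : Fin 4 → k := fun i => (v p * w i - w p * v i) / D with hw'
  have hv'p : v' p = 1 := by
    rw [hv', div_eq_one_iff_eq hD]; ring
  have hv'q : v' q = 0 := by
    rw [hv', div_eq_zero_iff]; left; ring
  have hw'p : w' p = 0 := by
    rw [hw', div_eq_zero_iff]; left; ring
  have hw'q : w' q = 1 := by
    rw [hw', div_eq_one_iff_eq hD]; ring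
  -- kernel conditions for v' w'
  have keylin : ∀ c : Fin 4 → k, (∑ i, c i * v i = 0) → (∑ i, c i * w i = 0) →
      (∑ i, c i * v' i = 0) ∧ (∑ i, c i * w' i = 0) := by
    intro c hcv hcw
    constructor
    · calc ∑ i, c i * v' i
          = ∑ i, (w q * (c i * v i) - v q * (c i * w i)) / D :=
            Finset.sum_congr rfl (fun i _ => by rw [hv']; ring)
        _ = (w q * (∑ i, c i * v i) - v q * (∑ i, c i * w i)) / D := by
            rw [← Finset.sum_div, Finset.mul_sum, Finset.mul_sum, ← Finset.sum_sub_distrib]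
        _ = 0 := by rw [hcv, hcw]; simp
    · calc ∑ i, c i * w' i
          = ∑ i, (v p * (c i * w i) - w p * (c i * v i)) / D :=
            Finset.sum_congr rfl (fun i _ => by rw [hw']; ring)
        _ = (v p * (∑ i, c i * w i) - w p * (∑ i, c i * v i)) / D := by
            rw [← Finset.sum_div, Finset.mul_sum, Finset.mul_sum, ← Finset.sum_sub_distrib]
        _ = 0 := by rw [hcv, hcw]; simp
  obtain ⟨hk1v, hk1w⟩ := keylin c₁ hv1 hw1
  obtain ⟨hk2v, hk2w⟩ := keylin c₂ hv2 hw2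
  -- the substitution homomorphism
  set φ : MvPolynomial (Fin 4) k →ₐ[k] Polynomial k :=
    aeval (fun i => Polynomial.C (v' i) * Polynomial.X + Polynomial.C (w' i)) with hφ
  have hφlin : ∀ (c : Fin 4 → k), (∑ i, c i * v' i = 0) → (∑ i, c i * w' i = 0) →
      φ (∑ i, C (c i) * X i) = 0 := by
    intro c hcv hcw
    rw [map_sum]
    have : ∀ i : Fin 4, φ (C (c i) * X i)
        = Polynomial.C (c i * v' i) * Polynomial.X + Polynomial.C (c i * w' i) := by
      intro i
      rw [map_mul, hφ, aeval_C, aeval_X, Polynomial.algebraMap_eq]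
      rw [Polynomial.C_mul, Polynomial.C_mul]
      ring
    rw [Finset.sum_congr rfl (fun i _ => this i)]
    rw [Finset.sum_add_distrib, ← Finset.sum_mul, ← map_sum, ← map_sum, hcv, hcw]
    simp
  have hφl₁ : φ l₁ = 0 := by rw [hl₁]; exact hφlin c₁ hk1v hk1w
  have hφl₂ : φ l₂ = 0 := by rw [hl₂]; exact hφlin c₂ hk2v hk2w
  obtain ⟨f, g, hfg⟩ := Ideal.mem_span_pair.mp hmem
  have hφF : (∑ i, Polynomial.C (a i) *
      (Polynomial.C (v' i) * Polynomial.X + Polynomial.C (w' i)) ^ d) = 0 := by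
    have h := congrArg φ hfg
    rw [map_add, map_mul, map_mul, hφl₁, hφl₂, mul_zero, mul_zero, add_zero] at h
    rw [map_sum] at h
    have : ∀ i : Fin 4, φ (C (a i) * X i ^ d)
        = Polynomial.C (a i) * (Polynomial.C (v' i) * Polynomial.X + Polynomial.C (w' i)) ^ d := by
      intro i
      rw [map_mul, map_pow, hφ, aeval_C, aeval_X, Polynomial.algebraMap_eq]
    rw [Finset.sum_congr rfl (fun i _ => this i)] at h
    exact h.symm
  have heq : ∀ j, j ≤ d → ∑ i, a i * (v' i ^ j * w' i ^ (d - j)) = 0 := by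
    intro j hj
    have h := congrArg (fun P => Polynomial.coeff P j) hφF
    simp only [Polynomial.coeff_zero] at h
    rw [Polynomial.finset_sum_coeff] at h
    have hterm : ∀ i : Fin 4, (Polynomial.C (a i) *
        (Polynomial.C (v' i) * Polynomial.X + Polynomial.C (w' i)) ^ d).coeff j
        = (d.choose j : k) * (a i * (v' i ^ j * w' i ^ (d - j))) := by
      intro i
      rw [Polynomial.coeff_C_mul, coeff_lin_pow _ _ _ _ hj]
      ring
    rw [Finset.sum_congr rfl (fun i _ => hterm i), ← Finset.mul_sum] at h
    rcases mul_eq_zero.mp h with h' | h'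
    · exact absurd h' (Nat.cast_ne_zero.mpr (Nat.choose_pos hj).ne')
    · exact h'
  -- distinctness
  have hpq : p ≠ q := by
    intro h
    apply hD
    rw [hDdef, h]; ring
  have hrs_all : ∀ p q : Fin 4, p ≠ q →
      ∃ r s : Fin 4, r ≠ s ∧ p ≠ r ∧ p ≠ s ∧ q ≠ r ∧ q ≠ s := by decide
  obtain ⟨r, s, hrs, hpr, hps, hqr, hqs⟩ := hrs_all p q hpq
  have hmid := mid d hd a v' w' ha p q r s hpq hpr hps hqr hqs hrs hv'p hw'p hv'q hw'q heq
  rcases hmid with ⟨hx1, hy1⟩ | ⟨hx1, hy1⟩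
  · exact asm1 d (by omega) a ha p q r s hpq hpr hps hqr hqs hrs hx1 hy1
  · exact asm1 d (by omega) a ha q p r s hpq.symm hqr hqs hpr hps hrs hx1 hy1

end Helpers


/-- The diagonal surface `a₀x₀^d + a₁x₁^d + a₂x₂^d + a₃x₃^d = 0` contains a line over `k` iff
one of the three pairs of ratios consists of `d`-th powers. -/
theorem containsLine_iff (k : Type*) [Field k] [CharZero k] (d : ℕ) (hd : 3 ≤ d)
    (a : Fin 4 → kˣ) :
    ContainsLine k d (fun i => (a i : k)) ↔
      ((∃ x : k, x ^ d = -((a 1 : k) / (a 0 : k))) ∧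
        (∃ y : k, y ^ d = -((a 2 : k) / (a 3 : k)))) ∨
      ((∃ x : k, x ^ d = -((a 2 : k) / (a 0 : k))) ∧
        (∃ y : k, y ^ d = -((a 3 : k) / (a 1 : k)))) ∨
      ((∃ x : k, x ^ d = -((a 3 : k) / (a 0 : k))) ∧
        (∃ y : k, y ^ d = -((a 1 : k) / (a 2 : k)))) := by

  have ha : ∀ i, (fun i => ((a i : k))) i ≠ 0 := fun i => Units.ne_zero (a i)
  constructor
  · rintro ⟨l₁, l₂, h₁, h₂, hind, hmem⟩
    exact forward_aux d hd _ ha l₁ l₂ h₁ h₂ hmem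
  · rintro (⟨⟨x, hx⟩, ⟨y, hy⟩⟩ | ⟨⟨x, hx⟩, ⟨y, hy⟩⟩ | ⟨⟨x, hx⟩, ⟨y, hy⟩⟩)
    · exact back d hd _ ha 0 1 2 3 (by decide) (by decide) (by decide) (by decide)
        (by decide) (by decide) x y hx hy
    · exact back d hd _ ha 0 2 3 1 (by decide) (by decide) (by decide) (by decide)
        (by decide) (by decide) x y hx hy
    · exact back d hd _ ha 0 3 1 2 (by decide) (by decide) (by decide) (by decide)
        (by decide) (by decide) x y hx hy
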